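/- arXiv:1409.0732 — 2 statements merged into one kernel-verified Lean document; each statement's English description precedes it below -/
import Mathlib

section
/- Let p ∈ (0,∞), X ∈ L^p(ℝ^d) with law μ not a Dirac mass, and let (a_N) be an L^p-optimal greedy quantization sequence. Suppose there exist b ∈ (0,1/2) and a constant C̃ > 0 such that for all N and all ξ ∈ ℝ^d, e_p(a^{(N)}∪{ξ}, X)^p ≤ e_p(a^{(N)}, X)^p - (1/C̃)·Ψ_b(ξ)^{-1}·d(ξ, a^{(N)})^{p+d}, where Ψ_b ∈ L^{p/(p+d)}(μ). Then limsup_N N^{1/d} e_p(a^{(N)}, X) < ∞. -/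
open MeasureTheory Metric

/-- The grid `{a 1, ..., a N}` formed by the first `N` terms of the sequence `a`. -/
def grid {E : Type*} (a : ℕ → E) (N : ℕ) : Set E := a '' Set.Icc 1 N

/-- `a` is an `L^p`-optimal greedy quantization sequence for `X`. -/
def IsGreedy {E : Type*} [NormedAddCommGroup E] [MeasurableSpace E]
    {Ω : Type*} [MeasurableSpace Ω] (P : Measure Ω) (X : Ω → E) (p : ℝ) (a : ℕ → E) : Prop :=
  ∀ N : ℕ, ∀ ξ : E,
    ∫ ω, infDist (X ω) (insert (a (N + 1)) (grid a N)) ^ p ∂P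
      ≤ ∫ ω, infDist (X ω) (insert ξ (grid a N)) ^ p ∂P

/-!
Write `A N = e_p(a^{(N)}, X)^p`. Since the greedy point `a (N + 1)` does at least as well as any
other point `ξ`, the micro inequality bounds the decrement from below at every `ξ`:
`d(ξ, a^{(N)})^{p+d} ≤ C̃ Ψ(ξ) (A N - A (N + 1))`. Raising this to the power `p / (p + d)` and
integrating in `ξ` against the law `μ` of `X` gives the macro inequality
`A N ≤ C̃^{p/(p+d)} (∫ Ψ^{p/(p+d)} dμ) (A N - A (N + 1))^{p/(p+d)}`, that is,
`A (N + 1) ≤ A N - c A N ^ (1 + d/p)`. By Bernoulli's inequality `A N ^ (-d/p)` then grows at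
least linearly in `N`, so `N A N ^ (d/p)` stays bounded.
-/

lemma one_add_mul_le_one_sub_rpow_neg {α x : ℝ} (hα : 0 < α) (hx : x < 1) :
    1 + α * x ≤ (1 - x) ^ (-α) := by
  have hpos : 0 < 1 - x := by linarith
  rw [Real.rpow_def_of_pos hpos]
  calc 1 + α * x ≤ Real.exp (α * x) := by linarith [Real.add_one_le_exp (α * x)]
    _ ≤ Real.exp (Real.log (1 - x) * -α) :=
      Real.exp_le_exp.2 (by nlinarith [Real.log_le_sub_one_of_pos hpos])

lemma rpow_neg_add_mul_le_rpow_neg {α c x y : ℝ} (hα : 0 < α) (hc : 0 ≤ c) (hx : 0 ≤ x)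
    (hy : 0 < y) (h : y + c * x ^ (1 + α) ≤ x) : x ^ (-α) + α * c ≤ y ^ (-α) := by
  have hxpos : 0 < x := hy.trans_le (by nlinarith [Real.rpow_nonneg hx (1 + α)])
  have hxα : 0 < x ^ α := Real.rpow_pos_of_pos hxpos α
  set t := c * x ^ α
  have hyx : y ≤ x * (1 - t) := by
    rw [Real.rpow_add hxpos, Real.rpow_one] at h
    nlinarith
  have ht : t < 1 := by
    by_contra! ht
    nlinarith
  calc x ^ (-α) + α * c = x ^ (-α) * (1 + α * t) := by
        rw [show t = c * x ^ α from rfl, Real.rpow_neg hx]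
        field_simp
    _ ≤ x ^ (-α) * (1 - t) ^ (-α) := by
        gcongr
        exact one_add_mul_le_one_sub_rpow_neg hα ht
    _ = (x * (1 - t)) ^ (-α) := (Real.mul_rpow hx (by linarith)).symm
    _ ≤ y ^ (-α) := Real.rpow_le_rpow_of_nonpos hy hyx (by linarith)

theorem natCast_mul_rpow_le_of_add_mul_rpow_le {α c : ℝ} (hα : 0 < α) (hc : 0 < c)
    {A : ℕ → ℝ} (hA : ∀ N, 0 ≤ A N)
    (hrec : ∀ N, 1 ≤ N → A (N + 1) + c * A N ^ (1 + α) ≤ A N) {N : ℕ} (hN : 1 ≤ N) :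
    N * A N ^ α ≤ (min 1 α * c)⁻¹ := by
  set c₀ := min 1 α * c
  have hc₀ : 0 < c₀ := mul_pos (lt_min one_pos hα) hc
  have hmul_le_iff : ∀ {n u : ℝ}, 0 < u → (n * u ≤ c₀⁻¹ ↔ c₀ * n ≤ u⁻¹) := fun hu => by
    rw [← one_div, le_div_iff₀' hc₀, ← one_div, le_div_iff₀ hu]
    exact iff_of_eq (congrArg (· ≤ 1) (mul_assoc c₀ _ _).symm)
  induction N, hN using Nat.le_induction with
  | base =>
    rcases (hA 1).eq_or_lt with h0 | h0
    · simp [← h0, Real.zero_rpow hα.ne', hc₀.le]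
    · have h := hrec 1 le_rfl
      rw [Real.rpow_add h0, Real.rpow_one] at h
      have hcA : c * A 1 ^ α ≤ 1 := by nlinarith [hA 2]
      have hc₀c : c₀ ≤ c := mul_le_of_le_one_left hc.le (min_le_left _ _)
      rw [Nat.cast_one, one_mul]
      calc A 1 ^ α ≤ c⁻¹ := by rwa [← one_div, le_div_iff₀' hc]
        _ ≤ c₀⁻¹ := inv_anti₀ hc₀ hc₀c
  | succ N hN ih =>
    rcases (hA (N + 1)).eq_or_lt with h0 | h0
    · simp [← h0, Real.zero_rpow hα.ne', hc₀.le]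
    · have hstep := rpow_neg_add_mul_le_rpow_neg hα hc.le (hA N) h0 (hrec N hN)
      have hAN : 0 < A N := h0.trans_le (by
        nlinarith [hrec N hN, Real.rpow_nonneg (hA N) (1 + α)])
      rw [hmul_le_iff (Real.rpow_pos_of_pos hAN α), ← Real.rpow_neg (hA N)] at ih
      rw [hmul_le_iff (Real.rpow_pos_of_pos h0 α), ← Real.rpow_neg (hA _), Nat.cast_succ]
      have : c₀ ≤ α * c := mul_le_mul_of_nonneg_right (min_le_right _ _) hc.le
      linarith

lemma add_inv_rpow_mul_rpow_le {q M x y : ℝ} (hq : 0 < q) (hM : 0 < M) (hx : 0 ≤ x)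
    (hyx : y ≤ x) (h : x ≤ M * (x - y) ^ q) : y + (M ^ q⁻¹)⁻¹ * x ^ q⁻¹ ≤ x := by
  have h1 : x / M ≤ (x - y) ^ q := by rwa [div_le_iff₀' hM]
  have h2 := Real.rpow_le_rpow (div_nonneg hx hM.le) h1 (inv_nonneg.2 hq.le)
  rw [Real.div_rpow hx hM.le, ← Real.rpow_mul (sub_nonneg.2 hyx), mul_inv_cancel₀ hq.ne',
    Real.rpow_one] at h2
  rw [inv_mul_eq_div]
  linarith

lemma rpow_le_rpow_div_of_rpow_le {r t p s : ℝ} (hr : 0 ≤ r) (hp : 0 ≤ p) (hs : 0 < s)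
    (h : r ^ s ≤ t) : r ^ p ≤ t ^ (p / s) :=
  calc r ^ p = (r ^ s) ^ (p / s) := by rw [← Real.rpow_mul hr, mul_div_cancel₀ _ hs.ne']
    _ ≤ t ^ (p / s) := Real.rpow_le_rpow (Real.rpow_nonneg hr s) h (div_nonneg hp hs.le)

lemma integral_pos_of_forall_pos {α : Type*} [MeasurableSpace α] {μ : Measure α} (hμ : μ ≠ 0)
    {f : α → ℝ} (hf : ∀ x, 0 < f x) (hfi : Integrable f μ) : 0 < ∫ x, f x ∂μ := by
  rw [integral_pos_iff_support_of_nonneg (fun x => (hf x).le) hfi,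
    Function.support_eq_univ fun x => (hf x).ne']
  exact Measure.measure_univ_pos.2 hμ

lemma infDist_insert_eq_min {α : Type*} [PseudoMetricSpace α] {s : Set α} (hs : s.Nonempty)
    (x y : α) : infDist x (insert y s) = min (infDist x s) (dist x y) := by
  rw [infDist, ← Set.singleton_union, infEDist_union, infEDist_singleton,
    ENNReal.toReal_min (edist_ne_top x y) (infEDist_ne_top hs), min_comm, ← dist_edist]
  rfl

section Greedy

lemma grid_succ {E : Type*} (a : ℕ → E) (N : ℕ) :
    grid a (N + 1) = insert (a (N + 1)) (grid a N) := by
  rw [grid, grid, ← Set.image_insert_eq, Set.insert_Icc_right_eq_Icc_add_one (by omega)]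

lemma mem_grid_one {E : Type*} (a : ℕ → E) {N : ℕ} (hN : 1 ≤ N) : a 1 ∈ grid a N :=
  ⟨1, ⟨le_rfl, hN⟩, rfl⟩

variable {E : Type*} [NormedAddCommGroup E] {Ω : Type*} [MeasurableSpace Ω]

/-- The paper's `e_p(a^{(N)}, X) ^ p`. -/
noncomputable def distortion (P : Measure Ω) (X : Ω → E) (p : ℝ) (a : ℕ → E) (N : ℕ) : ℝ :=
  ∫ ω, infDist (X ω) (grid a N) ^ p ∂P

lemma distortion_nonneg (P : Measure Ω) (X : Ω → E) (p : ℝ) (a : ℕ → E) (N : ℕ) :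
    0 ≤ distortion P X p a N :=
  integral_nonneg fun _ => Real.rpow_nonneg infDist_nonneg p

lemma distortion_eq_integral_map [MeasurableSpace E] [OpensMeasurableSpace E] {P : Measure Ω}
    {X : Ω → E} (hX : AEMeasurable X P) (p : ℝ) (a : ℕ → E) (N : ℕ) :
    distortion P X p a N = ∫ ξ, infDist ξ (grid a N) ^ p ∂P.map X :=
  (integral_map hX
    ((continuous_infDist_pt _).measurable.pow_const p).aestronglyMeasurable).symm

variable [MeasurableSpace E] {P : Measure Ω} {X : Ω → E} {p : ℝ} {a : ℕ → E}

lemma IsGreedy.distortion_succ_le_integral_min (ha : IsGreedy P X p a) {N : ℕ} (hN : 1 ≤ N)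
    (ξ : E) : distortion P X p a (N + 1)
      ≤ ∫ ω, (min (infDist (X ω) (grid a N)) ‖X ω - ξ‖) ^ p ∂P := by
  rw [distortion, grid_succ]
  simpa only [infDist_insert_eq_min ⟨a 1, mem_grid_one a hN⟩, dist_eq_norm] using ha N ξ

lemma IsGreedy.distortion_succ_le (ha : IsGreedy P X p a) {N : ℕ} (hN : 1 ≤ N) :
    distortion P X p a (N + 1) ≤ distortion P X p a N := by
  have h := ha N (a 1)
  rwa [Set.insert_eq_of_mem (mem_grid_one a hN), ← grid_succ] at h

theorem IsGreedy.distortion_le_mul_sub_rpow [OpensMeasurableSpace E] (ha : IsGreedy P X p a)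
    (hX : AEMeasurable X P) (hp : 0 ≤ p) {s C : ℝ} (hs : 0 < s) (hC : 0 < C) {Ψ : E → ℝ}
    (hΨ : ∀ ξ, 0 < Ψ ξ) (hΨint : Integrable (fun ξ => Ψ ξ ^ (p / s)) (P.map X))
    {N : ℕ} (hN : 1 ≤ N)
    (hmicro : ∀ ξ, ∫ ω, (min (infDist (X ω) (grid a N)) ‖X ω - ξ‖) ^ p ∂P
      ≤ distortion P X p a N - (1 / C) * (Ψ ξ)⁻¹ * infDist ξ (grid a N) ^ s) :
    distortion P X p a N ≤ (C ^ (p / s) * ∫ ξ, Ψ ξ ^ (p / s) ∂P.map X)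
      * (distortion P X p a N - distortion P X p a (N + 1)) ^ (p / s) := by
  set D := distortion P X p a N - distortion P X p a (N + 1)
  have hD : 0 ≤ D := sub_nonneg.2 (ha.distortion_succ_le hN)
  have hpt : ∀ ξ, infDist ξ (grid a N) ^ p ≤ C ^ (p / s) * D ^ (p / s) * Ψ ξ ^ (p / s) := by
    intro ξ
    have hdecr := (ha.distortion_succ_le_integral_min hN ξ).trans (hmicro ξ)
    have hCΨ : 0 < C * Ψ ξ := mul_pos hC (hΨ ξ)
    have hdist : infDist ξ (grid a N) ^ s ≤ C * Ψ ξ * D := by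
      rw [← div_le_iff₀' hCΨ]
      calc infDist ξ (grid a N) ^ s / (C * Ψ ξ)
          = (1 / C) * (Ψ ξ)⁻¹ * infDist ξ (grid a N) ^ s := by field_simp
        _ ≤ D := by linarith
    calc infDist ξ (grid a N) ^ p ≤ (C * Ψ ξ * D) ^ (p / s) :=
          rpow_le_rpow_div_of_rpow_le infDist_nonneg hp hs hdist
      _ = C ^ (p / s) * D ^ (p / s) * Ψ ξ ^ (p / s) := by
          rw [Real.mul_rpow hCΨ.le hD, Real.mul_rpow hC.le (hΨ ξ).le]
          ring
  calc distortion P X p a N = ∫ ξ, infDist ξ (grid a N) ^ p ∂P.map X :=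
        distortion_eq_integral_map hX p a N
    _ ≤ ∫ ξ, C ^ (p / s) * D ^ (p / s) * Ψ ξ ^ (p / s) ∂P.map X :=
        integral_mono_of_nonneg (ae_of_all _ fun _ => Real.rpow_nonneg infDist_nonneg p)
          (hΨint.const_mul _) (ae_of_all _ hpt)
    _ = _ := by
        rw [integral_const_mul]
        ring

end Greedy

theorem stmt_8_general {d : ℕ} (hd : 0 < d) {E : Type*} [NormedAddCommGroup E]
    [MeasurableSpace E] [BorelSpace E]
    {Ω : Type*} [MeasurableSpace Ω] (P : Measure Ω) [IsProbabilityMeasure P]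
    (X : Ω → E) (hX : Measurable X) (p : ℝ) (hp : 0 < p)
    (a : ℕ → E) (ha : IsGreedy P X p a)
    (Ψ : E → ℝ) (hΨpos : ∀ ξ, 0 < Ψ ξ)
    (Ctil : ℝ) (hCtil : 0 < Ctil)
    (hmicro : ∀ N : ℕ, 1 ≤ N → ∀ ξ : E,
      ∫ ω, (min (infDist (X ω) (grid a N)) ‖X ω - ξ‖) ^ p ∂P
        ≤ ∫ ω, infDist (X ω) (grid a N) ^ p ∂P
          - (1 / Ctil) * (Ψ ξ)⁻¹ * infDist ξ (grid a N) ^ (p + d))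
    (hΨint : Integrable (fun ξ => Ψ ξ ^ (p / (p + d))) (Measure.map X P)) :
    ∃ C : ℝ, ∀ N : ℕ, 1 ≤ N →
      (N : ℝ) ^ ((1 : ℝ) / d) * (∫ ω, infDist (X ω) (grid a N) ^ p ∂P) ^ (1 / p) ≤ C := by
  set A := distortion P X p a
  have hA : ∀ N, 0 ≤ A N := distortion_nonneg P X p a
  have hpd : 0 < p + d := by positivity
  set q := p / (p + d)
  have hq : 0 < q := by positivity
  set M := Ctil ^ q * ∫ ξ, Ψ ξ ^ q ∂P.map X
  have hM : 0 < M := mul_pos (Real.rpow_pos_of_pos hCtil q) <|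
    integral_pos_of_forall_pos (Measure.isProbabilityMeasure_map hX.aemeasurable).ne_zero
      (fun ξ => Real.rpow_pos_of_pos (hΨpos ξ) q) hΨint
  have hexp : q⁻¹ = 1 + d / p := by
    simp only [q]
    field_simp
  have hrec : ∀ N, 1 ≤ N → A (N + 1) + (M ^ q⁻¹)⁻¹ * A N ^ (1 + d / p) ≤ A N := fun N hN => by
    rw [← hexp]
    exact add_inv_rpow_mul_rpow_le hq hM (hA N) (ha.distortion_succ_le hN)
      (ha.distortion_le_mul_sub_rpow hX.aemeasurable hp.le hpd hCtil hΨpos hΨint hN (hmicro N hN))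
  refine ⟨((min 1 (d / p) * (M ^ q⁻¹)⁻¹)⁻¹) ^ (1 / (d : ℝ)), fun N hN => ?_⟩
  have hdecay := natCast_mul_rpow_le_of_add_mul_rpow_le (div_pos (Nat.cast_pos.2 hd) hp)
    (inv_pos.2 (Real.rpow_pos_of_pos hM _)) hA hrec hN
  calc (N : ℝ) ^ (1 / (d : ℝ)) * A N ^ (1 / p) = ((N : ℝ) * A N ^ (d / p)) ^ (1 / (d : ℝ)) := by
        rw [Real.mul_rpow (Nat.cast_nonneg N) (Real.rpow_nonneg (hA N) _), ← Real.rpow_mul (hA N)]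
        congr 2
        field_simp
    _ ≤ _ := Real.rpow_le_rpow (mul_nonneg N.cast_nonneg (Real.rpow_nonneg (hA N) _)) hdecay
        (by positivity)

theorem stmt_8 {d : ℕ} (hd : 0 < d) {E : Type*} [NormedAddCommGroup E] [NormedSpace ℝ E]
    [FiniteDimensional ℝ E] (hdim : Module.finrank ℝ E = d)
    [MeasurableSpace E] [BorelSpace E]
    {Ω : Type*} [MeasurableSpace Ω] (P : Measure Ω) [IsProbabilityMeasure P]
    (X : Ω → E) (hX : Measurable X) (p : ℝ) (hp : 0 < p)
    (hLp : Integrable (fun ω => ‖X ω‖ ^ p) P)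
    (hnotdirac : ∀ x : E, Measure.map X P ≠ Measure.dirac x)
    (a : ℕ → E) (ha : IsGreedy P X p a)
    (b : ℝ) (hb : b ∈ Set.Ioo (0 : ℝ) (1 / 2))
    (Ψ : E → ℝ) (hΨpos : ∀ ξ, 0 < Ψ ξ)
    (Ctil : ℝ) (hCtil : 0 < Ctil)
    (hmicro : ∀ N : ℕ, 1 ≤ N → ∀ ξ : E,
      ∫ ω, (min (infDist (X ω) (grid a N)) ‖X ω - ξ‖) ^ p ∂P
        ≤ ∫ ω, infDist (X ω) (grid a N) ^ p ∂P
          - (1 / Ctil) * (Ψ ξ)⁻¹ * infDist ξ (grid a N) ^ (p + d))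
    (hΨint : Integrable (fun ξ => Ψ ξ ^ (p / (p + d))) (Measure.map X P)) :
    ∃ C : ℝ, ∀ N : ℕ, 1 ≤ N →
      (N : ℝ) ^ ((1 : ℝ) / d) * (∫ ω, infDist (X ω) (grid a N) ^ p ∂P) ^ (1 / p) ≤ C :=
  stmt_8_general hd P X hX p hp a ha Ψ hΨpos Ctil hCtil hmicro hΨint
end

section
/- Let p ∈ (0,∞), q > p, X with law μ, and let (a_N) be an L^p-optimal greedy sequence. Suppose there exists a constant C > 0 such that for all N ≥ 1, e_q(a^{(N)}, X)^{p+d} ≤ C·(e_p(a^{(N)},X)^p - e_p(a^{(N+1)},X)^p), and suppose limsup_N N^{1/d} e_p(a^{(N)},X) < ∞. Then limsup_N N^{1/d} e_q(a^{(N)}, X) < ∞. -/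
open MeasureTheory Metric

/-!
Summing `e_q(k)^(p+d) ≤ C (e_p(k)^p - e_p(k+1)^p)` over `k ∈ [M/2, M]` telescopes, and since
`e_q` is eventually non-increasing in `k` this gives `(M/2) e_q(M)^(p+d) ≤ C e_p(M/2)^p`, which the
rate `e_p(N)^p = O(N^(-p/d))` turns into `e_q(M) = O(M^(-1/d))`. Eventual monotonicity of `e_q` is
all that survives the junk value of a non-integrable integral: either some `L^q` error is finite,
and then so are all later ones, or all of them are `0`.
-/

lemma card_mul_le_of_telescoping {v I : ℕ → ℝ} {C : ℝ} {N M : ℕ}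
    (hv : AntitoneOn v (Set.Icc N M))
    (hstep : ∀ k ∈ Finset.Ico N (M + 1), v k ≤ C * (I k - I (k + 1)))
    (hC : 0 ≤ C) (hI : 0 ≤ I (M + 1)) (hNM : N ≤ M + 1) :
    ((M + 1 - N : ℕ) : ℝ) * v M ≤ C * I N := by
  have htelescope : ∑ k ∈ Finset.Ico N (M + 1), (I k - I (k + 1)) = I N - I (M + 1) := by
    rw [← neg_sub, ← Finset.sum_Ico_sub I hNM, ← Finset.sum_neg_distrib]
    simp only [neg_sub]
  calc ((M + 1 - N : ℕ) : ℝ) * v M = ∑ _k ∈ Finset.Ico N (M + 1), v M := by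
        rw [Finset.sum_const, Nat.card_Ico, nsmul_eq_mul]
    _ ≤ ∑ k ∈ Finset.Ico N (M + 1), C * (I k - I (k + 1)) := by
        refine Finset.sum_le_sum fun k hk => le_trans ?_ (hstep k hk)
        rw [Finset.mem_Ico] at hk
        exact hv ⟨hk.1, by omega⟩ ⟨by omega, le_rfl⟩ (by omega)
    _ = C * (I N - I (M + 1)) := by rw [← Finset.mul_sum, htelescope]
    _ ≤ C * I N := by gcongr; linarith

lemma rpow_mul_le_of_telescoping {v I : ℕ → ℝ} {C B s : ℝ} {k₀ M : ℕ}
    (hv : AntitoneOn v (Set.Ici k₀)) (hvM : 0 ≤ v M) (hI : ∀ k, 0 ≤ I k)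
    (hstep : ∀ k, 1 ≤ k → v k ≤ C * (I k - I (k + 1)))
    (hrate : ∀ N : ℕ, 1 ≤ N → (N : ℝ) ^ s * I N ≤ B)
    (hC : 0 ≤ C) (hs : 0 ≤ s) (hM : 2 * k₀ ≤ M) (hM₁ : 1 ≤ M) :
    (M : ℝ) ^ (1 + s) * v M ≤ 2 ^ (1 + s) * (C * B) := by
  set N := M / 2 + 1
  have hhalf_pos : (0 : ℝ) < M / 2 := by
    have : (1 : ℝ) ≤ M := by exact_mod_cast hM₁
    linarith
  have hhalf_le_N : (M : ℝ) / 2 ≤ N := by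
    rw [div_le_iff₀ two_pos]; exact_mod_cast (by omega : M ≤ N * 2)
  have hhalf_le_card : (M : ℝ) / 2 ≤ ((M + 1 - N : ℕ) : ℝ) := by
    rw [div_le_iff₀ two_pos]; exact_mod_cast (by omega : M ≤ (M + 1 - N) * 2)
  have hsum : ((M + 1 - N : ℕ) : ℝ) * v M ≤ C * I N :=
    card_mul_le_of_telescoping (hv.mono fun k hk => le_trans (by omega) hk.1)
      (fun k hk => hstep k (by simp only [Finset.mem_Ico] at hk; omega)) hC (hI _) (by omega)
  have hhalf : ((M : ℝ) / 2) ^ (1 + s) * v M ≤ C * B :=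
    calc ((M : ℝ) / 2) ^ (1 + s) * v M = ((M : ℝ) / 2) ^ s * ((M / 2) * v M) := by
          rw [Real.rpow_one_add' hhalf_pos.le (by positivity)]; ring
      _ ≤ (N : ℝ) ^ s * (((M + 1 - N : ℕ) : ℝ) * v M) := by gcongr
      _ ≤ (N : ℝ) ^ s * (C * I N) := by gcongr
      _ = C * ((N : ℝ) ^ s * I N) := by ring
      _ ≤ C * B := by gcongr; exact hrate N (by omega)
  calc (M : ℝ) ^ (1 + s) * v M = 2 ^ (1 + s) * (((M : ℝ) / 2) ^ (1 + s) * v M) := by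
        rw [Real.div_rpow (by positivity) zero_le_two]; field_simp
    _ ≤ 2 ^ (1 + s) * (C * B) := by gcongr

lemma exists_antitoneOn_integral {Ω : Type*} [MeasurableSpace Ω] {μ : Measure Ω}
    {f : ℕ → Ω → ℝ} {n : ℕ} (hmeas : ∀ k, AEStronglyMeasurable (f k) μ)
    (hnonneg : ∀ k ω, 0 ≤ f k ω) (hf : AntitoneOn f (Set.Ici n)) :
    ∃ k₀, AntitoneOn (fun k => ∫ ω, f k ω ∂μ) (Set.Ici k₀) := by
  by_cases hint : ∃ k₀ ≥ n, Integrable (f k₀) μ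
  · obtain ⟨k₀, hk₀, hk₀int⟩ := hint
    refine ⟨k₀, fun j hj k hk hjk => ?_⟩
    have hjint : Integrable (f j) μ :=
      hk₀int.mono' (hmeas j) <| ae_of_all _ fun ω => by
        rw [Real.norm_of_nonneg (hnonneg j ω)]
        exact hf hk₀ (le_trans hk₀ hj) hj ω
    exact integral_mono_of_nonneg (ae_of_all _ (hnonneg k)) hjint
      (ae_of_all _ (hf (le_trans hk₀ hj) (le_trans hk₀ hk) hjk))
  · push Not at hint
    refine ⟨n, fun j hj k hk _ => ?_⟩
    simp only [integral_undef (hint j hj), integral_undef (hint k hk), le_refl]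

lemma grid_mono {E : Type*} (a : ℕ → E) : Monotone (grid a) :=
  fun _ _ h => Set.image_mono (Set.Icc_subset_Icc_right h)

lemma grid_nonempty {E : Type*} (a : ℕ → E) {N : ℕ} (hN : 1 ≤ N) : (grid a N).Nonempty :=
  ⟨a 1, 1, ⟨le_rfl, hN⟩, rfl⟩

lemma antitoneOn_infDist_grid {E : Type*} [PseudoMetricSpace E] (a : ℕ → E) (x : E) :
    AntitoneOn (fun N => infDist x (grid a N)) (Set.Ici 1) :=
  fun _ hj _ _ hjk => infDist_le_infDist_of_subset (grid_mono a hjk) (grid_nonempty a hj)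

lemma exists_antitoneOn_integral_infDist_grid_rpow {E : Type*} [NormedAddCommGroup E]
    [MeasurableSpace E] [BorelSpace E] {Ω : Type*} [MeasurableSpace Ω] (P : Measure Ω)
    {X : Ω → E} (hX : Measurable X) (a : ℕ → E) {q : ℝ} (hq : 0 ≤ q) :
    ∃ k₀, AntitoneOn (fun N => ∫ ω, infDist (X ω) (grid a N) ^ q ∂P) (Set.Ici k₀) :=
  exists_antitoneOn_integral
    (fun _ => (((continuous_infDist_pt _).measurable.comp hX).pow_const q).aestronglyMeasurable)
    (fun _ _ => Real.rpow_nonneg infDist_nonneg q)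
    (fun _ hj _ hk hjk ω => Real.rpow_le_rpow infDist_nonneg
      (antitoneOn_infDist_grid a (X ω) hj hk hjk) hq)

lemma mul_rpow_rpow {x y : ℝ} (hx : 0 ≤ x) (hy : 0 ≤ y) (r t : ℝ) :
    (x ^ r * y) ^ t = x ^ (r * t) * y ^ t := by
  rw [Real.mul_rpow (Real.rpow_nonneg hx r) hy, Real.rpow_mul hx]

lemma rpow_mul_le_rpow_of_rpow_mul_rpow_inv_le {x y c r t : ℝ} (hx : 0 ≤ x) (hy : 0 ≤ y)
    (ht : 0 < t) (h : x ^ r * y ^ t⁻¹ ≤ c) : x ^ (r * t) * y ≤ c ^ t := by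
  have h' := Real.rpow_le_rpow (mul_nonneg (Real.rpow_nonneg hx r) (Real.rpow_nonneg hy _)) h ht.le
  rwa [mul_rpow_rpow hx (Real.rpow_nonneg hy _), Real.rpow_inv_rpow hy ht.ne'] at h'

lemma rpow_mul_le_rpow_inv_of_rpow_mul_rpow_le {x y c r t : ℝ} (hx : 0 ≤ x) (hy : 0 ≤ y)
    (hc : 0 ≤ c) (ht : 0 < t) (h : x ^ (r * t) * y ^ t ≤ c) : x ^ r * y ≤ c ^ t⁻¹ := by
  rwa [Real.le_rpow_inv_iff_of_pos (mul_nonneg (Real.rpow_nonneg hx r) hy) hc ht,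
    mul_rpow_rpow hx hy]

theorem stmt_9_general {d : ℕ} (hd : 0 < d) {E : Type*} [NormedAddCommGroup E]
    [MeasurableSpace E] [BorelSpace E]
    {Ω : Type*} [MeasurableSpace Ω] (P : Measure Ω)
    (X : Ω → E) (hX : Measurable X) (p q : ℝ) (hp : 0 < p) (hpq : p < q)
    (a : ℕ → E)
    (C : ℝ) (hC : 0 < C)
    (hkey : ∀ N : ℕ, 1 ≤ N →
      ((∫ ω, infDist (X ω) (grid a N) ^ q ∂P) ^ (1 / q)) ^ (p + d)
        ≤ C * (∫ ω, infDist (X ω) (grid a N) ^ p ∂P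
               - ∫ ω, infDist (X ω) (grid a (N + 1)) ^ p ∂P))
    (C' : ℝ)
    (hrate : ∀ N : ℕ, 1 ≤ N →
      (N : ℝ) ^ ((1 : ℝ) / d) * (∫ ω, infDist (X ω) (grid a N) ^ p ∂P) ^ (1 / p) ≤ C') :
    ∃ C'' : ℝ, ∀ N : ℕ, 1 ≤ N →
      (N : ℝ) ^ ((1 : ℝ) / d) * (∫ ω, infDist (X ω) (grid a N) ^ q ∂P) ^ (1 / q) ≤ C'' := by
  have hq : 0 < q := hp.trans hpq
  set Iq : ℕ → ℝ := fun N => ∫ ω, infDist (X ω) (grid a N) ^ q ∂P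
  set Ip : ℕ → ℝ := fun N => ∫ ω, infDist (X ω) (grid a N) ^ p ∂P
  have hIq : ∀ N, 0 ≤ Iq N := fun N => integral_nonneg fun _ => Real.rpow_nonneg infDist_nonneg q
  have hIp : ∀ N, 0 ≤ Ip N := fun N => integral_nonneg fun _ => Real.rpow_nonneg infDist_nonneg p
  obtain ⟨k₀, hk₀⟩ := exists_antitoneOn_integral_infDist_grid_rpow P hX a hq.le
  have hv : AntitoneOn (fun N => (Iq N ^ (1 / q)) ^ (p + d)) (Set.Ici k₀) := fun j hj k hk hjk =>
    Real.rpow_le_rpow (Real.rpow_nonneg (hIq k) _)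
      (Real.rpow_le_rpow (hIq k) (hk₀ hj hk hjk) (by positivity)) (by positivity)
  have hrate_pow : ∀ N : ℕ, 1 ≤ N → (N : ℝ) ^ (1 / d * p) * Ip N ≤ C' ^ p := fun N hN =>
    rpow_mul_le_rpow_of_rpow_mul_rpow_inv_le N.cast_nonneg (hIp N) hp
      (by simpa only [one_div] using hrate N hN)
  have hK : 0 ≤ 2 ^ (1 + 1 / d * p) * (C * C' ^ p) :=
    have hC' : 0 ≤ C' ^ p := le_trans (mul_nonneg (by positivity) (hIp 1)) (hrate_pow 1 le_rfl)
    by positivity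
  have hbound : ∀ M, max (2 * k₀) 1 ≤ M →
      (M : ℝ) ^ ((1 : ℝ) / d) * Iq M ^ (1 / q) ≤ (2 ^ (1 + 1 / d * p) * (C * C' ^ p)) ^ (p + d)⁻¹ :=
    fun M hM => rpow_mul_le_rpow_inv_of_rpow_mul_rpow_le M.cast_nonneg
      (Real.rpow_nonneg (hIq M) _) hK (by positivity) <| by
        convert rpow_mul_le_of_telescoping hv
          (Real.rpow_nonneg (Real.rpow_nonneg (hIq M) _) _) hIp hkey hrate_pow hC.le
          (by positivity) (le_of_max_le_left hM) (le_of_max_le_right hM) using 3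
        field_simp
        ring
  obtain ⟨C'', hC''⟩ := (Filter.isBoundedUnder_of_eventually_le
    (Filter.eventually_atTop.2 ⟨_, hbound⟩)).bddAbove_range
  exact ⟨C'', fun N _ => hC'' (Set.mem_range_self N)⟩

theorem stmt_9 {d : ℕ} (hd : 0 < d) {E : Type*} [NormedAddCommGroup E] [NormedSpace ℝ E]
    [FiniteDimensional ℝ E] (hdim : Module.finrank ℝ E = d)
    [MeasurableSpace E] [BorelSpace E]
    {Ω : Type*} [MeasurableSpace Ω] (P : Measure Ω) [IsProbabilityMeasure P]
    (X : Ω → E) (hX : Measurable X) (p q : ℝ) (hp : 0 < p) (hpq : p < q)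
    (a : ℕ → E) (ha : IsGreedy P X p a)
    (C : ℝ) (hC : 0 < C)
    (hkey : ∀ N : ℕ, 1 ≤ N →
      ((∫ ω, infDist (X ω) (grid a N) ^ q ∂P) ^ (1 / q)) ^ (p + d)
        ≤ C * (∫ ω, infDist (X ω) (grid a N) ^ p ∂P
               - ∫ ω, infDist (X ω) (grid a (N + 1)) ^ p ∂P))
    (C' : ℝ)
    (hrate : ∀ N : ℕ, 1 ≤ N →
      (N : ℝ) ^ ((1 : ℝ) / d) * (∫ ω, infDist (X ω) (grid a N) ^ p ∂P) ^ (1 / p) ≤ C') :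
    ∃ C'' : ℝ, ∀ N : ℕ, 1 ≤ N →
      (N : ℝ) ^ ((1 : ℝ) / d) * (∫ ω, infDist (X ω) (grid a N) ^ q ∂P) ^ (1 / q) ≤ C'' :=
  stmt_9_general hd P X hX p q hp hpq a C hC hkey C' hrate
end
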